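/- arXiv:2004.08576 — 5 statements merged into one kernel-verified Lean document; each statement's English description precedes it below -/
import Mathlib

section
/- With the explicit Neumann solution formula ζ(t,r) = φ₊(r−t) + φ₋(r+t) (φ± as in Proposition 2.4 of the paper), if ζ₀ ∈ C^1, ζ₁ ∈ C^0 are bounded and compactly supported on [1,∞), then there is a constant C > 0 such that the modified outgoing/incoming waves φ̄₊(s) = φ₊(s) + (1/2)∫_1^∞ ζ₁ and φ̄₋(s) = φ₋(s) − (1/2)∫_1^∞ ζ₁ satisfy |φ̄₊(s)| + |φ̄₋(s)| ≤ C e^s 1_{s ≤ C} for all s ∈ ℝ. -/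
open Set MeasureTheory intervalIntegral

private lemma zero_of_ge (f : ℝ → ℝ) (r : ℝ) (hr : tsupport f ⊆ Metric.closedBall 0 r)
    (x : ℝ) (hx : r < x) : f x = 0 := by
  apply image_eq_zero_of_notMem_tsupport
  intro hmem
  have h1 := hr hmem
  rw [Metric.mem_closedBall, Real.dist_eq, sub_zero] at h1
  have := le_abs_self x
  linarith

private lemma expPieceBound (g : ℝ → ℝ) (Mg A s b : ℝ)
    (hMg : ∀ x, |g x| ≤ Mg) (hb1 : 1 ≤ b) (hbA : b ≤ A) :
    |∫ σ in (1:ℝ)..b, Real.exp (s + σ - 2) * g σ| ≤ Real.exp (s + A - 2) * Mg * (A - 1) := by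
  have hMg0 : 0 ≤ Mg := (abs_nonneg _).trans (hMg 0)
  have h := intervalIntegral.norm_integral_le_of_norm_le_const
    (C := Real.exp (s + A - 2) * Mg) (f := fun σ => Real.exp (s + σ - 2) * g σ)
    (a := 1) (b := b) ?_
  · rw [Real.norm_eq_abs] at h
    rw [abs_of_nonneg (by linarith : (0:ℝ) ≤ b - 1)] at h
    refine h.trans ?_
    have h2 : 0 ≤ Real.exp (s + A - 2) * Mg := mul_nonneg (Real.exp_pos _).le hMg0
    nlinarith
  · intro x hx
    rw [Set.uIoc_of_le hb1] at hx
    rw [Real.norm_eq_abs, abs_mul, Real.abs_exp]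
    exact mul_le_mul (Real.exp_le_exp.2 (by linarith [hx.2])) (hMg x) (abs_nonneg _)
      (Real.exp_pos _).le

private lemma expIntBound (g : ℝ → ℝ) (hg : Continuous g) (Mg A : ℝ) (hA : 2 ≤ A)
    (hMg : ∀ x, |g x| ≤ Mg) (h0 : ∀ x, A ≤ x → g x = 0) (s : ℝ) (hs : s ≤ 1) :
    |∫ σ in (1:ℝ)..(2 - s), Real.exp (s + σ - 2) * g σ|
      ≤ Real.exp (s + A - 2) * Mg * (A - 1) := by
  rcases le_or_gt (2 - s) A with h | h
  · exact expPieceBound g Mg A s (2 - s) hMg (by linarith) h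
  · have hcont : Continuous fun σ => Real.exp (s + σ - 2) * g σ := by
      exact (Real.continuous_exp.comp (by continuity)).mul hg
    have hsplit := intervalIntegral.integral_add_adjacent_intervals (μ := volume)
      (hcont.intervalIntegrable 1 A) (hcont.intervalIntegrable A (2 - s))
    have hz : (∫ σ in A..(2 - s), Real.exp (s + σ - 2) * g σ) = 0 := by
      have he : Set.EqOn (fun σ => Real.exp (s + σ - 2) * g σ) 0 (Set.uIcc A (2 - s)) := by
        intro x hx
        rw [Set.uIcc_of_le h.le] at hx
        simp [h0 x hx.1]
      rw [intervalIntegral.integral_congr he]; simp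
    rw [← hsplit, hz, add_zero]
    exact expPieceBound g Mg A s A hMg (by linarith) le_rfl

private lemma sum_bound (eA es es1 M₀ M₁ M₂ A : ℝ)
    (heA : 0 ≤ eA) (hes : 0 ≤ es) (hM₀0 : 0 ≤ M₀) (hM₁0 : 0 ≤ M₁) (hM₂0 : 0 ≤ M₂)
    (hA2 : 2 ≤ A) (hr : es1 * M₀ ≤ es * M₀) :
    (eA * es * (M₂ + M₁) * (A - 1) + (M₀ + 2 * M₁ * (A - 1)) * (eA * es) / 2 + es1 * M₀) * 2
      ≤ (2 * (M₀ + 2 * M₁ * (A - 1))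
          + 2 * (eA * (M₂ + M₁) * (A - 1) + (M₀ + 2 * M₁ * (A - 1)) * eA + M₀)) * es := by
  have hc : 0 ≤ M₀ + 2 * M₁ * (A - 1) := by
    nlinarith [mul_nonneg hM₁0 (show (0:ℝ) ≤ A - 1 by linarith)]
  nlinarith [hr, mul_nonneg hc hes, mul_nonneg hc (mul_nonneg heA hes)]

/-- Exponential bound for the modified outgoing/incoming waves: if `ζ₀ ∈ C^1` and
`ζ₁ ∈ C^0` are compactly supported, then the modified profiles
`φ̄₊(s) = φ₊(s) + (1/2)∫_1^∞ ζ₁` and `φ̄₋(s) = φ₋(s) − (1/2)∫_1^∞ ζ₁` satisfy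
`|φ̄₊(s)| + |φ̄₋(s)| ≤ C e^s 1_{s ≤ C}` for some constant `C > 0`. -/
theorem stmt_5 (ζ₀ ζ₁ : ℝ → ℝ) (hζ₀ : ContDiff ℝ 1 ζ₀) (hζ₁ : Continuous ζ₁)
    (hs₀ : HasCompactSupport ζ₀) (hs₁ : HasCompactSupport ζ₁) :
    let φp : ℝ → ℝ := fun s =>
      if 1 ≤ s then ζ₀ s / 2 - (1 / 2) * ∫ σ in (1 : ℝ)..s, ζ₁ σ
      else (∫ σ in (1 : ℝ)..(2 - s), Real.exp (s + σ - 2) * (deriv ζ₀ σ + ζ₁ σ))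
        - ζ₀ (2 - s) / 2 - (1 / 2) * (∫ σ in (1 : ℝ)..(2 - s), ζ₁ σ)
        + Real.exp (s - 1) * ζ₀ 1
    let φm : ℝ → ℝ := fun s =>
      if 1 ≤ s then ζ₀ s / 2 + (1 / 2) * ∫ σ in (1 : ℝ)..s, ζ₁ σ
      else (∫ σ in (1 : ℝ)..(2 - s), Real.exp (s + σ - 2) * (deriv ζ₀ σ - ζ₁ σ))
        - ζ₀ (2 - s) / 2 + (1 / 2) * (∫ σ in (1 : ℝ)..(2 - s), ζ₁ σ)
        + Real.exp (s - 1) * ζ₀ 1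
    let φpbar : ℝ → ℝ := fun s => φp s + (1 / 2) * ∫ σ in Ioi (1 : ℝ), ζ₁ σ
    let φmbar : ℝ → ℝ := fun s => φm s - (1 / 2) * ∫ σ in Ioi (1 : ℝ), ζ₁ σ
    ∃ C > (0 : ℝ), ∀ s : ℝ,
      |φpbar s| + |φmbar s|
        ≤ C * Real.exp s * (Iic C).indicator (fun _ => (1 : ℝ)) s := by
  intro φp φm φpbar φmbar
  have hζ₀c : Continuous ζ₀ := hζ₀.continuous
  have hζ₀' : Continuous (deriv ζ₀) := hζ₀.continuous_deriv le_rfl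
  have hsd : HasCompactSupport (deriv ζ₀) := hs₀.deriv
  obtain ⟨M₀, hM₀⟩ := hs₀.exists_bound_of_continuous hζ₀c
  obtain ⟨M₁, hM₁⟩ := hs₁.exists_bound_of_continuous hζ₁
  obtain ⟨M₂, hM₂⟩ := hsd.exists_bound_of_continuous hζ₀'
  simp only [Real.norm_eq_abs] at hM₀ hM₁ hM₂
  have hM₀0 : 0 ≤ M₀ := (abs_nonneg _).trans (hM₀ 0)
  have hM₁0 : 0 ≤ M₁ := (abs_nonneg _).trans (hM₁ 0)
  have hM₂0 : 0 ≤ M₂ := (abs_nonneg _).trans (hM₂ 0)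
  obtain ⟨r₀, hr₀⟩ := hs₀.isCompact.isBounded.subset_closedBall 0
  obtain ⟨r₁, hr₁⟩ := hs₁.isCompact.isBounded.subset_closedBall 0
  obtain ⟨r₂, hr₂⟩ := hsd.isCompact.isBounded.subset_closedBall 0
  obtain ⟨A, hA2, hz₀, hz₁, hzd⟩ : ∃ A : ℝ, 2 ≤ A ∧ (∀ x, A ≤ x → ζ₀ x = 0)
      ∧ (∀ x, A ≤ x → ζ₁ x = 0) ∧ (∀ x, A ≤ x → deriv ζ₀ x = 0) := by
    refine ⟨max 2 (max r₀ (max r₁ r₂)) + 1, ?_, ?_, ?_, ?_⟩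
    · have := le_max_left (2:ℝ) (max r₀ (max r₁ r₂)); linarith
    · intro x hx
      refine zero_of_ge ζ₀ r₀ hr₀ x ?_
      have h1 : r₀ ≤ max r₀ (max r₁ r₂) := le_max_left _ _
      have h2 := le_max_right (2:ℝ) (max r₀ (max r₁ r₂))
      linarith
    · intro x hx
      refine zero_of_ge ζ₁ r₁ hr₁ x ?_
      have h1 : r₁ ≤ max r₀ (max r₁ r₂) := le_trans (le_max_left _ _) (le_max_right _ _)
      have h2 := le_max_right (2:ℝ) (max r₀ (max r₁ r₂))
      linarith
    · intro x hx
      refine zero_of_ge (deriv ζ₀) r₂ hr₂ x ?_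
      have h1 : r₂ ≤ max r₀ (max r₁ r₂) := le_trans (le_max_right _ _) (le_max_right _ _)
      have h2 := le_max_right (2:ℝ) (max r₀ (max r₁ r₂))
      linarith
  have hA1 : (1:ℝ) ≤ A := by linarith
  -- integral lemmas
  have hint₁ : ∀ a b : ℝ, IntervalIntegrable ζ₁ volume a b := fun a b =>
    hζ₁.intervalIntegrable a b
  have hJconst : ∀ t, A ≤ t → (∫ σ in (1:ℝ)..t, ζ₁ σ) = ∫ σ in (1:ℝ)..A, ζ₁ σ := by
    intro t ht
    have hz : (∫ σ in A..t, ζ₁ σ) = 0 := by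
      have he : Set.EqOn ζ₁ 0 (Set.uIcc A t) := by
        intro x hx; rw [Set.uIcc_of_le ht] at hx; exact hz₁ x hx.1
      rw [intervalIntegral.integral_congr he]; simp
    have hsp := intervalIntegral.integral_add_adjacent_intervals (hint₁ 1 A) (hint₁ A t)
    linarith
  have hJbound : ∀ t, 1 ≤ t → |∫ σ in (1:ℝ)..t, ζ₁ σ| ≤ M₁ * (A - 1) := by
    have key : ∀ b : ℝ, 1 ≤ b → b ≤ A → |∫ σ in (1:ℝ)..b, ζ₁ σ| ≤ M₁ * (A - 1) := by
      intro b h1 h2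
      have h := intervalIntegral.norm_integral_le_of_norm_le_const (C := M₁)
        (f := ζ₁) (a := 1) (b := b) (fun x _ => by rw [Real.norm_eq_abs]; exact hM₁ x)
      rw [Real.norm_eq_abs, abs_of_nonneg (by linarith : (0:ℝ) ≤ b - 1)] at h
      nlinarith
    intro t ht
    rcases le_or_gt t A with h | h
    · exact key t ht h
    · rw [hJconst t h.le]; exact key A hA1 le_rfl
  have hIoi : (∫ σ in Set.Ioi (1:ℝ), ζ₁ σ) = ∫ σ in (1:ℝ)..A, ζ₁ σ := by
    have hint : Integrable ζ₁ := hζ₁.integrable_of_hasCompactSupport hs₁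
    have hzero : (∫ x in Set.Ioi A, ζ₁ x) = 0 :=
      MeasureTheory.setIntegral_eq_zero_of_forall_eq_zero fun x hx => hz₁ x (le_of_lt hx)
    rw [intervalIntegral.integral_of_le hA1, ← Set.Ioc_union_Ioi_eq_Ioi hA1,
      MeasureTheory.setIntegral_union (Set.Ioc_disjoint_Ioi le_rfl) measurableSet_Ioi
        hint.integrableOn hint.integrableOn, hzero, add_zero]
  -- constants
  have hexA : (0:ℝ) < Real.exp (A - 2) := Real.exp_pos _
  have c1 : 0 ≤ Real.exp (A - 2) * (M₂ + M₁) * (A - 1) :=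
    mul_nonneg (mul_nonneg hexA.le (by linarith)) (by linarith)
  have c2 : 0 ≤ M₁ * (A - 1) := mul_nonneg hM₁0 (by linarith)
  have c3 : 0 ≤ (M₀ + 2 * M₁ * (A - 1)) * Real.exp (A - 2) :=
    mul_nonneg (by linarith) hexA.le
  obtain ⟨K₁, hK₁def⟩ : ∃ x : ℝ, x = M₀ + 2 * M₁ * (A - 1) := ⟨_, rfl⟩
  obtain ⟨K₂, hK₂def⟩ : ∃ x : ℝ, x = 2 * (Real.exp (A - 2) * (M₂ + M₁) * (A - 1)
      + (M₀ + 2 * M₁ * (A - 1)) * Real.exp (A - 2) + M₀) := ⟨_, rfl⟩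
  obtain ⟨K, hKdef⟩ : ∃ x : ℝ, x = 2 * K₁ + K₂ := ⟨_, rfl⟩
  have hK₁0 : 0 ≤ K₁ := by rw [hK₁def]; linarith
  have hK₂0 : 0 ≤ K₂ := by rw [hK₂def]; linarith
  have hK0 : 0 ≤ K := by rw [hKdef]; linarith
  refine ⟨A + K, by linarith, ?_⟩
  intro s
  have hes : (0:ℝ) < Real.exp s := Real.exp_pos s
  by_cases hsC : s ≤ A + K
  · rw [Set.indicator_of_mem (Set.mem_Iic.mpr hsC), mul_one]
    suffices main : |φpbar s| + |φmbar s| ≤ K * Real.exp s by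
      nlinarith [mul_nonneg (show (0:ℝ) ≤ A by linarith) hes.le]
    simp only [φpbar, φmbar, φp, φm, hIoi]
    clear hsC φmbar φpbar φm φp
    rcases le_or_gt 1 s with h1s | h1s
    · rw [if_pos h1s, if_pos h1s]
      have e1 := hJbound s h1s
      have e2 := hJbound A hA1
      have e3 := hM₀ s
      have hexp1 : (1:ℝ) ≤ Real.exp s := Real.one_le_exp (by linarith)
      have b1 : |ζ₀ s / 2 - 1 / 2 * (∫ σ in (1:ℝ)..s, ζ₁ σ)
          + 1 / 2 * (∫ σ in (1:ℝ)..A, ζ₁ σ)| ≤ K₁ := by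
        obtain ⟨l1, u1⟩ := abs_le.mp e1
        obtain ⟨l2, u2⟩ := abs_le.mp e2
        obtain ⟨l3, u3⟩ := abs_le.mp e3
        rw [abs_le, hK₁def]; constructor <;> linarith
      have b2 : |ζ₀ s / 2 + 1 / 2 * (∫ σ in (1:ℝ)..s, ζ₁ σ)
          - 1 / 2 * (∫ σ in (1:ℝ)..A, ζ₁ σ)| ≤ K₁ := by
        obtain ⟨l1, u1⟩ := abs_le.mp e1
        obtain ⟨l2, u2⟩ := abs_le.mp e2
        obtain ⟨l3, u3⟩ := abs_le.mp e3
        rw [abs_le, hK₁def]; constructor <;> linarith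
      have hKK : (2 * K₁ + K₂) * 1 ≤ (2 * K₁ + K₂) * Real.exp s :=
        mul_le_mul_of_nonneg_left hexp1 (by linarith)
      calc |ζ₀ s / 2 - 1 / 2 * (∫ σ in (1:ℝ)..s, ζ₁ σ)
              + 1 / 2 * (∫ σ in (1:ℝ)..A, ζ₁ σ)|
            + |ζ₀ s / 2 + 1 / 2 * (∫ σ in (1:ℝ)..s, ζ₁ σ)
              - 1 / 2 * (∫ σ in (1:ℝ)..A, ζ₁ σ)|
          ≤ K₁ + K₁ := add_le_add b1 b2
        _ ≤ K * Real.exp s := by rw [hKdef]; linarith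
    · rw [if_neg (not_le.mpr h1s), if_neg (not_le.mpr h1s)]
      obtain ⟨Jt, hJtdef⟩ : ∃ x : ℝ, (∫ σ in (1:ℝ)..(2 - s), ζ₁ σ) = x := ⟨_, rfl⟩
      obtain ⟨JA, hJAdef⟩ : ∃ x : ℝ, (∫ σ in (1:ℝ)..A, ζ₁ σ) = x := ⟨_, rfl⟩
      rw [hJtdef, hJAdef]
      have hJtb : |Jt| ≤ M₁ * (A - 1) := hJtdef ▸ hJbound (2 - s) (by linarith)
      have hJAb : |JA| ≤ M₁ * (A - 1) := hJAdef ▸ hJbound A hA1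
      have hEp := expIntBound (fun σ => deriv ζ₀ σ + ζ₁ σ) (hζ₀'.add hζ₁) (M₂ + M₁) A hA2
        (fun x => (abs_add_le _ _).trans (add_le_add (hM₂ x) (hM₁ x)))
        (fun x hx => by show deriv ζ₀ x + ζ₁ x = 0; rw [hzd x hx, hz₁ x hx, add_zero]) s h1s.le
      have hEm := expIntBound (fun σ => deriv ζ₀ σ - ζ₁ σ) (hζ₀'.sub hζ₁) (M₂ + M₁) A hA2
        (fun x => by
          show |deriv ζ₀ x - ζ₁ x| ≤ M₂ + M₁
          rw [sub_eq_add_neg]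
          exact (abs_add_le _ _).trans (by rw [abs_neg]; exact add_le_add (hM₂ x) (hM₁ x)))
        (fun x hx => by show deriv ζ₀ x - ζ₁ x = 0; rw [hzd x hx, hz₁ x hx, sub_zero]) s h1s.le
      have hexpsplit : Real.exp (s + A - 2) = Real.exp (A - 2) * Real.exp s := by
        rw [← Real.exp_add]; congr 1; ring
      rw [hexpsplit] at hEp hEm
      -- middle bound
      have hmid : |ζ₀ (2 - s)| + |Jt - JA|
          ≤ (M₀ + 2 * M₁ * (A - 1)) * (Real.exp (A - 2) * Real.exp s) := by
        rcases le_or_gt (2 - s) A with h | h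
        · have h4 : (1:ℝ) ≤ Real.exp (A - 2) * Real.exp s := by
            rw [← Real.exp_add]; exact Real.one_le_exp (by linarith)
          have h1 : |ζ₀ (2 - s)| ≤ M₀ := hM₀ _
          have h5 : |Jt - JA| ≤ 2 * (M₁ * (A - 1)) := by
            obtain ⟨l2, u2⟩ := abs_le.mp hJtb
            obtain ⟨l3, u3⟩ := abs_le.mp hJAb
            rw [abs_le]; constructor <;> linarith
          nlinarith [mul_nonneg (show (0:ℝ) ≤ M₀ + 2 * M₁ * (A - 1) by linarith)
            (show (0:ℝ) ≤ Real.exp (A - 2) * Real.exp s - 1 by linarith)]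
        · have hJeq : Jt = JA := by
            rw [← hJtdef, ← hJAdef, hJconst (2 - s) h.le]
          rw [hJeq, sub_self, abs_zero, hz₀ (2 - s) h.le, abs_zero, add_zero]
          nlinarith
      have hexps1 : Real.exp (s - 1) ≤ Real.exp s := Real.exp_le_exp.mpr (by linarith)
      have hexps10 : (0:ℝ) < Real.exp (s - 1) := Real.exp_pos _
      obtain ⟨lz, uz⟩ := abs_le.mp (hM₀ 1)
      have u5 : Real.exp (s - 1) * ζ₀ 1 ≤ Real.exp (s - 1) * M₀ :=
        mul_le_mul_of_nonneg_left uz hexps10.le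
      have l5 : -(Real.exp (s - 1) * M₀) ≤ Real.exp (s - 1) * ζ₀ 1 := by
        rw [← mul_neg]; exact mul_le_mul_of_nonneg_left lz hexps10.le
      obtain ⟨X₁, hX₁def⟩ : ∃ x : ℝ,
        x = Real.exp (A - 2) * Real.exp s * (M₂ + M₁) * (A - 1) := ⟨_, rfl⟩
      obtain ⟨X₂, hX₂def⟩ : ∃ x : ℝ,
        x = (M₀ + 2 * M₁ * (A - 1)) * (Real.exp (A - 2) * Real.exp s) := ⟨_, rfl⟩
      rw [← hX₁def] at hEp hEm
      rw [← hX₂def] at hmid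
      obtain ⟨lp, up⟩ := abs_le.mp hEp
      obtain ⟨lm, um⟩ := abs_le.mp hEm
      have t1 := le_abs_self (ζ₀ (2 - s))
      have t2 := neg_abs_le (ζ₀ (2 - s))
      have t3 := le_abs_self (Jt - JA)
      have t4 := neg_abs_le (Jt - JA)
      have habs0 := abs_nonneg (ζ₀ (2 - s))
      have habs1 := abs_nonneg (Jt - JA)
      have bp : |(∫ σ in (1:ℝ)..(2 - s), Real.exp (s + σ - 2) * (deriv ζ₀ σ + ζ₁ σ))
          - ζ₀ (2 - s) / 2 - 1 / 2 * Jt + Real.exp (s - 1) * ζ₀ 1 + 1 / 2 * JA|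
          ≤ X₁ + X₂ / 2 + Real.exp (s - 1) * M₀ := by
        rw [abs_le]; constructor <;> linarith
      have bm : |(∫ σ in (1:ℝ)..(2 - s), Real.exp (s + σ - 2) * (deriv ζ₀ σ - ζ₁ σ))
          - ζ₀ (2 - s) / 2 + 1 / 2 * Jt + Real.exp (s - 1) * ζ₀ 1 - 1 / 2 * JA|
          ≤ X₁ + X₂ / 2 + Real.exp (s - 1) * M₀ := by
        rw [abs_le]; constructor <;> linarith
      have hr : Real.exp (s - 1) * M₀ ≤ Real.exp s * M₀ :=
        mul_le_mul_of_nonneg_right hexps1 hM₀0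
      have hsum : (X₁ + X₂ / 2 + Real.exp (s - 1) * M₀) * 2 ≤ K * Real.exp s := by
        rw [hKdef, hK₁def, hK₂def, hX₁def, hX₂def]
        exact sum_bound _ _ _ _ _ _ _ hexA.le hes.le hM₀0 hM₁0 hM₂0 hA2 hr
      calc |(∫ σ in (1:ℝ)..(2 - s), Real.exp (s + σ - 2) * (deriv ζ₀ σ + ζ₁ σ))
              - ζ₀ (2 - s) / 2 - 1 / 2 * Jt + Real.exp (s - 1) * ζ₀ 1 + 1 / 2 * JA|
            + |(∫ σ in (1:ℝ)..(2 - s), Real.exp (s + σ - 2) * (deriv ζ₀ σ - ζ₁ σ))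
              - ζ₀ (2 - s) / 2 + 1 / 2 * Jt + Real.exp (s - 1) * ζ₀ 1 - 1 / 2 * JA|
          ≤ (X₁ + X₂ / 2 + Real.exp (s - 1) * M₀)
            + (X₁ + X₂ / 2 + Real.exp (s - 1) * M₀) := add_le_add bp bm
        _ ≤ K * Real.exp s := by linarith [hsum]
  · rw [Set.indicator_of_notMem (by simpa using hsC), mul_zero]
    push_neg at hsC
    have hAs : A ≤ s := by linarith
    have h1s : (1:ℝ) ≤ s := by linarith
    simp only [φpbar, φmbar, φp, φm, hIoi]
    clear φmbar φpbar φm φp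
    rw [if_pos h1s, if_pos h1s, hz₀ s hAs, hJconst s hAs]
    ring_nf
    simp
end

section
/- Under the exponential bound |φ̄₊(s)| + |φ̄₋(s)| ≤ C e^s 1_{s ≤ C}, the function u(t,r) := (φ̄₊(r−t) + φ̄₋(r+t))/r satisfies lim_{t→∞} ∫_1^∞ u(t,r)^2 dr = 0. -/
open Set MeasureTheory Filter

/-- Decay of the weighted `L²` norm: if `φ̄₊, φ̄₋` satisfy the exponential bound
`|φ̄₊(s)| + |φ̄₋(s)| ≤ C e^s 1_{s ≤ C}`, then
`u(t,r) = (φ̄₊(r−t) + φ̄₋(r+t))/r` satisfies `∫_1^∞ u(t,r)^2 dr → 0` as `t → ∞`. -/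
theorem stmt_6 (φpbar φmbar : ℝ → ℝ) (hmp : Measurable φpbar) (hmm : Measurable φmbar)
    (C : ℝ) (hC : 0 < C)
    (hbound : ∀ s : ℝ, |φpbar s| + |φmbar s|
      ≤ C * Real.exp s * (Iic C).indicator (fun _ => (1 : ℝ)) s) :
    Tendsto (fun t : ℝ =>
        ∫ r in Ioi (1 : ℝ), ((φpbar (r - t) + φmbar (r + t)) / r) ^ 2)
      atTop (nhds 0) := by
  -- uniform bound
  have hub : ∀ s : ℝ, |φpbar s| + |φmbar s| ≤ C * Real.exp C := by
    intro s
    refine (hbound s).trans ?_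
    by_cases hs : s ≤ C
    · rw [indicator_of_mem (by simpa using hs), mul_one]
      have := Real.exp_le_exp.2 hs
      nlinarith [Real.exp_pos s]
    · rw [indicator_of_notMem (by simpa using hs), mul_zero]
      positivity
  -- vanishing beyond C
  have hzero : ∀ s : ℝ, C < s → φpbar s = 0 ∧ φmbar s = 0 := by
    intro s hs
    have h := hbound s
    rw [indicator_of_notMem (by simpa using not_le.2 hs), mul_zero] at h
    have h1 : |φpbar s| = 0 := le_antisymm (by nlinarith [abs_nonneg (φmbar s)]) (abs_nonneg _)
    have h2 : |φmbar s| = 0 := le_antisymm (by nlinarith [abs_nonneg (φpbar s)]) (abs_nonneg _)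
    exact ⟨abs_eq_zero.mp h1, abs_eq_zero.mp h2⟩
  -- exp bound for φpbar
  have hp : ∀ s : ℝ, |φpbar s| ≤ C * Real.exp s := by
    intro s
    refine le_trans (le_add_of_nonneg_right (abs_nonneg (φmbar s))) ((hbound s).trans ?_)
    by_cases hs : s ≤ C
    · rw [indicator_of_mem (by simpa using hs), mul_one]
    · rw [indicator_of_notMem (by simpa using hs), mul_zero]; positivity
  -- the dominating function is integrable on (1, ∞)
  have hbd_int : IntegrableOn (fun r : ℝ => (2 * (C * Real.exp C) / r) ^ 2) (Ioi 1) volume := by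
    have h0 : IntegrableOn (fun r : ℝ => r ^ (-2 : ℝ)) (Ioi 1) volume :=
      integrableOn_Ioi_rpow_of_lt (by norm_num) one_pos
    have h1 : IntegrableOn (fun r : ℝ => (2 * (C * Real.exp C)) ^ 2 * r ^ (-2 : ℝ)) (Ioi 1) volume :=
      h0.const_mul _
    refine h1.congr_fun (fun r hr => ?_) measurableSet_Ioi
    have hr0 : (0 : ℝ) < r := lt_trans one_pos hr
    beta_reduce
    rw [div_pow, Real.rpow_neg hr0.le, show ((2:ℝ)) = ((2:ℕ):ℝ) by norm_num,
      Real.rpow_natCast]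
    ring
  have key := tendsto_integral_filter_of_dominated_convergence
    (μ := volume.restrict (Ioi (1:ℝ))) (l := atTop) (f := fun _ : ℝ => (0 : ℝ))
    (F := fun t r => ((φpbar (r - t) + φmbar (r + t)) / r) ^ 2)
    (fun r : ℝ => (2 * (C * Real.exp C) / r) ^ 2)
    (by -- measurability
      filter_upwards with t
      exact ((((hmp.comp (measurable_id.sub_const t)).add
        (hmm.comp (measurable_id.add_const t))).div measurable_id).pow_const 2
        ).aestronglyMeasurable)
    (by -- domination
      filter_upwards with t
      filter_upwards [ae_restrict_mem measurableSet_Ioi] with r hr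
      have hr0 : (0 : ℝ) < r := lt_trans one_pos hr
      have hnum : |φpbar (r - t) + φmbar (r + t)| ≤ 2 * (C * Real.exp C) := by
        have ha := le_trans (le_add_of_nonneg_right (abs_nonneg (φmbar (r - t)))) (hub (r - t))
        have hb := le_trans (le_add_of_nonneg_left (abs_nonneg (φpbar (r + t)))) (hub (r + t))
        calc |φpbar (r - t) + φmbar (r + t)| ≤ |φpbar (r - t)| + |φmbar (r + t)| := abs_add_le _ _
          _ ≤ 2 * (C * Real.exp C) := by linarith
      have h1 : |(φpbar (r - t) + φmbar (r + t)) / r| ≤ 2 * (C * Real.exp C) / r := by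
        rw [abs_div, abs_of_pos hr0]
        gcongr
      rw [Real.norm_eq_abs, abs_pow]
      exact pow_le_pow_left₀ (abs_nonneg _) h1 2)
    hbd_int
    (by -- pointwise limit
      filter_upwards [ae_restrict_mem measurableSet_Ioi] with r hr
      have hr1 : (1 : ℝ) < r := hr
      have hr0 : (0 : ℝ) < r := lt_trans one_pos hr1
      have hg : Tendsto (fun t : ℝ => (C * Real.exp (r - t)) ^ 2) atTop (nhds 0) := by
        have h1 : Tendsto (fun t : ℝ => r - t) atTop atBot :=
          tendsto_atBot_add_const_left atTop r tendsto_neg_atTop_atBot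
        have h2 : Tendsto (fun t : ℝ => C * Real.exp (r - t)) atTop (nhds 0) := by
          simpa using (Real.tendsto_exp_atBot.comp h1).const_mul C
        simpa using h2.pow 2
      refine squeeze_zero' (Eventually.of_forall fun t => by positivity) ?_ hg
      filter_upwards [eventually_ge_atTop C] with t ht
      have hm0 : φmbar (r + t) = 0 := (hzero (r + t) (by linarith)).2
      have hpabs : |φpbar (r - t)| ≤ C * Real.exp (r - t) := hp _
      have hstep : ((φpbar (r - t) + φmbar (r + t)) / r) ^ 2
          = φpbar (r - t) ^ 2 / r ^ 2 := by
        rw [hm0, add_zero, div_pow]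
      rw [hstep]
      have hr2 : (1 : ℝ) ≤ r ^ 2 := by nlinarith
      have h3 : φpbar (r - t) ^ 2 / r ^ 2 ≤ φpbar (r - t) ^ 2 := by
        apply div_le_self (sq_nonneg _) hr2
      refine h3.trans ?_
      calc φpbar (r - t) ^ 2 = |φpbar (r - t)| ^ 2 := (sq_abs _).symm
        _ ≤ (C * Real.exp (r - t)) ^ 2 := pow_le_pow_left₀ (abs_nonneg _) hpabs 2)
  simpa using key
end

section
/- Double-integral exponential bound: for any R > 1 and any h ∈ L^2([1,∞)), ∫_{R−1}^∞ ∫_1^R ( ∫_1^{2−r+t} e^{σ−t} h(σ) dσ )^2 dr dt ≤ C_R ∫_1^∞ h(σ)^2 dσ for some constant C_R depending only on R. -/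
open Set MeasureTheory intervalIntegral Filter

/-- Cauchy–Schwarz with exponential weight on a bounded interval. -/
lemma cs_aux {t b : ℝ} {h' : ℝ → ℝ} (hmeas : StronglyMeasurable h')
    (hsq : IntegrableOn (fun σ => h' σ ^ 2) (Ioi (1 : ℝ)) volume)
    (hb1 : (1 : ℝ) ≤ b) :
    (∫ σ in Ioc 1 b, Real.exp (σ - t) * h' σ) ^ 2 ≤
      (∫ σ in Ioc 1 b, Real.exp (σ - t)) * ∫ σ in Ioc 1 b, Real.exp (σ - t) * h' σ ^ 2 := by
  set μb := volume.restrict (Ioc (1 : ℝ) b) with hμb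
  have hpq : Real.HolderConjugate 2 2 := Real.HolderConjugate.two_two
  set f : ℝ → ℝ := fun σ => Real.exp ((σ - t) / 2) with hf_def
  set g : ℝ → ℝ := fun σ => Real.exp ((σ - t) / 2) * |h' σ| with hg_def
  have hfsq : ∀ σ, f σ ^ 2 = Real.exp (σ - t) := by
    intro σ
    rw [hf_def, sq, ← Real.exp_add]
    ring_nf
  have hgsq : ∀ σ, g σ ^ 2 = Real.exp (σ - t) * h' σ ^ 2 := by
    intro σ
    rw [hg_def]
    rw [mul_pow, hfsq σ, sq_abs]
  have hexp_int : Integrable (fun σ => Real.exp (σ - t)) μb :=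
    ((Real.continuous_exp.comp (continuous_id.sub continuous_const)).integrableOn_Ioc)
  have hwh_int : Integrable (fun σ => Real.exp (σ - t) * h' σ ^ 2) μb := by
    have h1 : Integrable (fun σ => h' σ ^ 2) μb :=
      hsq.mono_set Ioc_subset_Ioi_self
    refine h1.bdd_mul (c := Real.exp (b - t))
      ((Real.continuous_exp.comp (continuous_id.sub continuous_const)).aestronglyMeasurable) ?_
    filter_upwards [ae_restrict_mem measurableSet_Ioc] with σ hσ
    rw [Real.norm_eq_abs, abs_of_pos (Real.exp_pos _)]
    exact Real.exp_le_exp.2 (by linarith [hσ.2])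
  have hf2 : MemLp f (ENNReal.ofReal 2) μb := by
    rw [show ENNReal.ofReal (2 : ℝ) = 2 by norm_num]
    refine (memLp_two_iff_integrable_sq ?_).2 ?_
    · exact (Real.continuous_exp.comp ((continuous_id.sub continuous_const).div_const 2)).aestronglyMeasurable
    · exact hexp_int.congr (Eventually.of_forall fun σ => (hfsq σ).symm)
  have hg2 : MemLp g (ENNReal.ofReal 2) μb := by
    rw [show ENNReal.ofReal (2 : ℝ) = 2 by norm_num]
    refine (memLp_two_iff_integrable_sq ?_).2 ?_
    · exact ((Real.continuous_exp.comp ((continuous_id.sub continuous_const).div_const 2)).measurable.mul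
        hmeas.measurable.abs).aestronglyMeasurable
    · exact hwh_int.congr (Eventually.of_forall fun σ => (hgsq σ).symm)
  have holder := MeasureTheory.integral_mul_le_Lp_mul_Lq_of_nonneg hpq
    (Eventually.of_forall fun σ => (Real.exp_pos _).le)
    (Eventually.of_forall fun σ => mul_nonneg (Real.exp_pos _).le (abs_nonneg _)) hf2 hg2
  have hfg : ∀ σ, f σ * g σ = ‖Real.exp (σ - t) * h' σ‖ := by
    intro σ
    rw [hf_def, hg_def, Real.norm_eq_abs, abs_mul, abs_of_pos (Real.exp_pos _), ← mul_assoc,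
      ← Real.exp_add]
    ring_nf
  have habs : |∫ σ, Real.exp (σ - t) * h' σ ∂μb| ≤ ∫ σ, f σ * g σ ∂μb := by
    calc |∫ σ, Real.exp (σ - t) * h' σ ∂μb| ≤ ∫ σ, ‖Real.exp (σ - t) * h' σ‖ ∂μb := by
          rw [← Real.norm_eq_abs]
          exact MeasureTheory.norm_integral_le_integral_norm (μ := μb)
            (fun σ => Real.exp (σ - t) * h' σ)
      _ = ∫ σ, f σ * g σ ∂μb := by
          exact integral_congr_ae (Eventually.of_forall fun σ => (hfg σ).symm)
  set A := ∫ σ, Real.exp (σ - t) ∂μb with hA_def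
  set B := ∫ σ, Real.exp (σ - t) * h' σ ^ 2 ∂μb with hB_def
  have hA0 : 0 ≤ A := integral_nonneg fun σ => (Real.exp_pos _).le
  have hB0 : 0 ≤ B := integral_nonneg fun σ => mul_nonneg (Real.exp_pos _).le (sq_nonneg _)
  have hrpowf : ∫ σ, f σ ^ (2 : ℝ) ∂μb = A := by
    refine integral_congr_ae (Eventually.of_forall fun σ => ?_)
    dsimp only
    rw [Real.rpow_two, hfsq σ]
  have hrpowg : ∫ σ, g σ ^ (2 : ℝ) ∂μb = B := by
    refine integral_congr_ae (Eventually.of_forall fun σ => ?_)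
    dsimp only
    rw [Real.rpow_two, hgsq σ]
  rw [hrpowf, hrpowg] at holder
  have key : |∫ σ, Real.exp (σ - t) * h' σ ∂μb| ≤ A ^ ((1 : ℝ) / 2) * B ^ ((1 : ℝ) / 2) :=
    habs.trans holder
  have hsq_le : (∫ σ, Real.exp (σ - t) * h' σ ∂μb) ^ 2 ≤
      (A ^ ((1 : ℝ) / 2) * B ^ ((1 : ℝ) / 2)) ^ 2 := by
    rw [← sq_abs]
    exact pow_le_pow_left₀ (abs_nonneg _) key 2
  have hAB : (A ^ ((1 : ℝ) / 2) * B ^ ((1 : ℝ) / 2)) ^ 2 = A * B := by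
    rw [mul_pow, ← Real.rpow_natCast (A ^ ((1:ℝ)/2)) 2, ← Real.rpow_natCast (B ^ ((1:ℝ)/2)) 2,
      ← Real.rpow_mul hA0, ← Real.rpow_mul hB0]
    norm_num
  calc (∫ σ in Ioc 1 b, Real.exp (σ - t) * h' σ) ^ 2
      ≤ (A ^ ((1 : ℝ) / 2) * B ^ ((1 : ℝ) / 2)) ^ 2 := hsq_le
    _ = A * B := hAB

/-- Double-integral exponential bound from the proof of local energy decay:
for `R > 1` there is `C_R > 0` such that for all `h ∈ L²([1,∞))`,
`∫_{R−1}^∞ ∫_1^R (∫_1^{2−r+t} e^{σ−t} h(σ) dσ)² dr dt ≤ C_R ∫_1^∞ h(σ)² dσ`. -/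
theorem stmt_9 (R : ℝ) (hR : 1 < R) :
    ∃ C > (0 : ℝ), ∀ h : ℝ → ℝ,
      MemLp h 2 (volume.restrict (Ioi (1 : ℝ))) →
      ∫ t in Ioi (R - 1),
          ∫ r in (1 : ℝ)..R,
            (∫ σ in (1 : ℝ)..(2 - r + t), Real.exp (σ - t) * h σ) ^ 2
        ≤ C * ∫ σ in Ioi (1 : ℝ), (h σ) ^ 2 := by
  refine ⟨(R - 1) * Real.exp 1 * Real.exp 1,
    mul_pos (mul_pos (by linarith) (Real.exp_pos 1)) (Real.exp_pos 1), ?_⟩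
  intro h hh
  -- replace h by a strongly measurable representative h'
  set h' : ℝ → ℝ := hh.1.mk h with hh'_def
  have hmeas : StronglyMeasurable h' := hh.1.stronglyMeasurable_mk
  have hae : h =ᵐ[volume.restrict (Ioi (1 : ℝ))] h' := hh.1.ae_eq_mk
  have hh' : MemLp h' 2 (volume.restrict (Ioi (1 : ℝ))) := hh.ae_eq hae
  have hsq : IntegrableOn (fun σ => h' σ ^ 2) (Ioi (1 : ℝ)) volume := hh'.integrable_sq
  have hRHS : (∫ σ in Ioi (1 : ℝ), (h σ) ^ 2) = ∫ σ in Ioi (1 : ℝ), h' σ ^ 2 :=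
    integral_congr_ae (hae.mono fun σ hσ => by simp only [hσ])
  set M : ℝ := ∫ σ in Ioi (1 : ℝ), h' σ ^ 2 with hM_def
  -- weighted L² mass up to level 1 + t
  set K : ℝ → ℝ := fun t => ∫ σ in Ioc (1 : ℝ) (1 + t), Real.exp (σ - t) * h' σ ^ 2 with hK_def
  have hKnonneg : ∀ t, 0 ≤ K t := fun t =>
    integral_nonneg fun σ => mul_nonneg (Real.exp_pos _).le (sq_nonneg _)
  have hint : ∀ t b : ℝ, IntegrableOn (fun σ => Real.exp (σ - t) * h' σ ^ 2) (Ioc 1 b) volume := by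
    intro t b
    have h1 : IntegrableOn (fun σ => h' σ ^ 2) (Ioc 1 b) volume :=
      hsq.mono_set Ioc_subset_Ioi_self
    refine h1.bdd_mul (c := Real.exp (b - t))
      ((Real.continuous_exp.comp (continuous_id.sub continuous_const)).aestronglyMeasurable) ?_
    filter_upwards [ae_restrict_mem measurableSet_Ioc] with σ hσ
    rw [Real.norm_eq_abs, abs_of_pos (Real.exp_pos _)]
    exact Real.exp_le_exp.2 (by linarith [hσ.2])
  -- Cauchy–Schwarz pointwise bound for the inner integral
  have hCS : ∀ t b : ℝ, (1 : ℝ) ≤ b → b ≤ 1 + t →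
      (∫ σ in Ioc (1 : ℝ) b, Real.exp (σ - t) * h' σ) ^ 2 ≤ Real.exp 1 * K t := by
    intro t b hb1 hb2
    have hmain := cs_aux hmeas hsq hb1 (t := t)
    have hA : (∫ σ in Ioc (1 : ℝ) b, Real.exp (σ - t)) ≤ Real.exp 1 := by
      have : (∫ σ in Ioc (1 : ℝ) b, Real.exp (σ - t)) =
          ∫ σ in (1 : ℝ)..b, Real.exp (σ - t) := (intervalIntegral.integral_of_le hb1).symm
      rw [this, intervalIntegral.integral_comp_sub_right (fun x => Real.exp x) t,
        integral_exp]
      have h1 : Real.exp (b - t) ≤ Real.exp 1 := Real.exp_le_exp.2 (by linarith)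
      have h2 : 0 < Real.exp (1 - t) := Real.exp_pos _
      linarith
    have hA0 : 0 ≤ ∫ σ in Ioc (1 : ℝ) b, Real.exp (σ - t) :=
      integral_nonneg fun σ => (Real.exp_pos _).le
    have hB0 : 0 ≤ ∫ σ in Ioc (1 : ℝ) b, Real.exp (σ - t) * h' σ ^ 2 :=
      integral_nonneg fun σ => mul_nonneg (Real.exp_pos _).le (sq_nonneg _)
    have hBK : (∫ σ in Ioc (1 : ℝ) b, Real.exp (σ - t) * h' σ ^ 2) ≤ K t := by
      refine setIntegral_mono_set (hint t (1 + t))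
        (Eventually.of_forall fun σ => mul_nonneg (Real.exp_pos _).le (sq_nonneg _)) ?_
      exact HasSubset.Subset.eventuallyLE (Ioc_subset_Ioc_right hb2)
    calc (∫ σ in Ioc (1 : ℝ) b, Real.exp (σ - t) * h' σ) ^ 2
        ≤ (∫ σ in Ioc (1 : ℝ) b, Real.exp (σ - t)) *
            ∫ σ in Ioc (1 : ℝ) b, Real.exp (σ - t) * h' σ ^ 2 := hmain
      _ ≤ Real.exp 1 * K t := mul_le_mul hA hBK hB0 (Real.exp_pos 1).le
  -- pointwise-in-t bound for the middle integral
  have hF : ∀ t ∈ Ioi (R - 1),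
      (∫ r in (1 : ℝ)..R, (∫ σ in (1 : ℝ)..(2 - r + t), Real.exp (σ - t) * h σ) ^ 2)
        ≤ (R - 1) * (Real.exp 1 * K t) := by
    intro t ht
    rw [mem_Ioi] at ht
    have hae' : ∀ᵐ σ ∂(volume : Measure ℝ), σ ∈ Ioi (1 : ℝ) → h σ = h' σ :=
      (ae_restrict_iff' measurableSet_Ioi).1 hae
    have hband : ∀ r ∈ Icc (1 : ℝ) R,
        (∫ σ in (1 : ℝ)..(2 - r + t), Real.exp (σ - t) * h σ) ^ 2 ≤ Real.exp 1 * K t := by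
      intro r hr
      have hb1 : (1 : ℝ) ≤ 2 - r + t := by
        have := hr.2; linarith
      have hIeq : (∫ σ in (1 : ℝ)..(2 - r + t), Real.exp (σ - t) * h σ)
          = ∫ σ in Ioc (1 : ℝ) (2 - r + t), Real.exp (σ - t) * h' σ := by
        rw [intervalIntegral.integral_of_le hb1]
        refine setIntegral_congr_ae measurableSet_Ioc ?_
        filter_upwards [hae'] with σ hσ hmem
        rw [hσ hmem.1]
      rw [hIeq]
      exact hCS t (2 - r + t) hb1 (by linarith [hr.1])
    by_cases hInt : IntervalIntegrable
        (fun r => (∫ σ in (1 : ℝ)..(2 - r + t), Real.exp (σ - t) * h σ) ^ 2) volume 1 R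
    · calc (∫ r in (1 : ℝ)..R, (∫ σ in (1 : ℝ)..(2 - r + t), Real.exp (σ - t) * h σ) ^ 2)
          ≤ ∫ _r in (1 : ℝ)..R, Real.exp 1 * K t :=
            intervalIntegral.integral_mono_on hR.le hInt (intervalIntegrable_const) hband
        _ = (R - 1) * (Real.exp 1 * K t) := by
            rw [intervalIntegral.integral_const, smul_eq_mul]
    · rw [intervalIntegral.integral_undef hInt]
      exact mul_nonneg (by linarith) (mul_nonneg (Real.exp_pos 1).le (hKnonneg t))
  -- Fubini part: the t-integral of K is at most e * M
  set μ := volume.restrict (Ioi (R - 1)) with hμ_def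
  set ν := volume.restrict (Ioi (1 : ℝ)) with hν_def
  set g : ℝ × ℝ → ℝ := fun p =>
    Set.indicator {q : ℝ × ℝ | q.2 ≤ 1 + q.1} (fun q => Real.exp (q.2 - q.1) * h' q.2 ^ 2) p
    with hg_def
  have hgmeas : StronglyMeasurable g := by
    have hs : MeasurableSet {q : ℝ × ℝ | q.2 ≤ 1 + q.1} :=
      measurableSet_le measurable_snd (measurable_const.add measurable_fst)
    have hfun : Measurable fun q : ℝ × ℝ => Real.exp (q.2 - q.1) * h' q.2 ^ 2 :=
      ((measurable_snd.sub measurable_fst).exp).mul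
        ((hmeas.measurable.comp measurable_snd).pow_const 2)
    exact (hfun.indicator hs).stronglyMeasurable
  have hgnonneg : ∀ p, 0 ≤ g p := by
    intro p
    rw [hg_def]
    exact Set.indicator_nonneg (fun q _ => mul_nonneg (Real.exp_pos _).le (sq_nonneg _)) p
  have hg_left : ∀ t σ : ℝ, g (t, σ) =
      Set.indicator (Iic (1 + t)) (fun σ => Real.exp (σ - t) * h' σ ^ 2) σ := by
    intro t σ
    simp only [hg_def, Set.indicator_apply, Set.mem_setOf_eq, Set.mem_Iic]
  have hg_right : ∀ t σ : ℝ, g (t, σ) =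
      Set.indicator (Ici (σ - 1)) (fun t => Real.exp (σ - t) * h' σ ^ 2) t := by
    intro t σ
    simp only [hg_def, Set.indicator_apply, Set.mem_setOf_eq, Set.mem_Ici]
    congr 1
    simp only [eq_iff_iff]
    constructor <;> intro hx <;> linarith
  have hKrepr : ∀ t, K t = ∫ σ, g (t, σ) ∂ν := by
    intro t
    have : (fun σ => g (t, σ)) =
        Set.indicator (Iic (1 + t)) (fun σ => Real.exp (σ - t) * h' σ ^ 2) := by
      funext σ; exact hg_left t σ
    rw [this, MeasureTheory.integral_indicator measurableSet_Iic, hν_def,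
      Measure.restrict_restrict measurableSet_Iic]
    rw [Set.inter_comm, Set.Ioi_inter_Iic]
  -- integrability in t for each σ
  have hg_t_int : ∀ σ : ℝ, Integrable (fun t => g (t, σ)) μ := by
    intro σ
    have base : Integrable (fun t : ℝ => Real.exp (σ - t) * h' σ ^ 2) μ := by
      have h1 : IntegrableOn (fun t : ℝ => Real.exp (-1 * t)) (Ioi (R - 1)) volume :=
        exp_neg_integrableOn_Ioi _ one_pos
      have h2 := h1.const_mul (Real.exp σ * h' σ ^ 2)
      refine h2.congr (Eventually.of_forall fun x => ?_)
      dsimp only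
      rw [Real.exp_sub]
      rw [neg_one_mul, Real.exp_neg]
      field_simp
    have := base.indicator (measurableSet_Ici (a := σ - 1))
    refine this.congr (Eventually.of_forall fun x => ?_)
    dsimp only
    rw [hg_right x σ]
  -- bound on the t-integral of g for each σ
  have hg_t_bound : ∀ σ : ℝ, (∫ t, g (t, σ) ∂μ) ≤ Real.exp 1 * h' σ ^ 2 := by
    intro σ
    have heq : (fun t => g (t, σ)) = fun t =>
        (Set.indicator (Ici (σ - 1)) (fun t => Real.exp (σ - t)) t) * h' σ ^ 2 := by
      funext x
      rw [hg_right x σ]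
      by_cases hx : x ∈ Ici (σ - 1) <;>
        simp [Set.indicator_apply, hx]
    rw [heq, MeasureTheory.integral_mul_const]
    have hIci_int : IntegrableOn (fun t : ℝ => Real.exp (σ - t)) (Ici (σ - 1)) volume := by
      rw [integrableOn_Ici_iff_integrableOn_Ioi]
      have h1 : IntegrableOn (fun t : ℝ => Real.exp (-1 * t)) (Ioi (σ - 1)) volume :=
        exp_neg_integrableOn_Ioi _ one_pos
      have h2 := h1.const_mul (Real.exp σ)
      refine h2.congr (Eventually.of_forall fun x => ?_)
      dsimp only
      rw [Real.exp_sub, neg_one_mul, Real.exp_neg]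
      field_simp
    have hIval : (∫ t in Ici (σ - 1), Real.exp (σ - t)) = Real.exp 1 := by
      rw [MeasureTheory.integral_Ici_eq_integral_Ioi]
      have : (fun t : ℝ => Real.exp (σ - t)) = fun t => Real.exp σ * Real.exp (-t) := by
        funext x; rw [Real.exp_sub, Real.exp_neg]; field_simp
      rw [this, MeasureTheory.integral_const_mul, integral_exp_neg_Ioi, ← Real.exp_add]
      norm_num
    have hstep : (∫ t, Set.indicator (Ici (σ - 1)) (fun t => Real.exp (σ - t)) t ∂μ)
        ≤ Real.exp 1 := by
      rw [hμ_def, MeasureTheory.integral_indicator measurableSet_Ici,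
        Measure.restrict_restrict measurableSet_Ici]
      calc (∫ t in Ici (σ - 1) ∩ Ioi (R - 1), Real.exp (σ - t))
          ≤ ∫ t in Ici (σ - 1), Real.exp (σ - t) := by
            refine setIntegral_mono_set hIci_int
              (Eventually.of_forall fun t => (Real.exp_pos _).le)
              (HasSubset.Subset.eventuallyLE Set.inter_subset_left)
        _ = Real.exp 1 := hIval
    exact mul_le_mul_of_nonneg_right hstep (sq_nonneg _)
  -- g is integrable on the product
  have hgint : Integrable g (μ.prod ν) := by
    refine (integrable_prod_iff' hgmeas.aestronglyMeasurable).2 ⟨ae_of_all _ hg_t_int, ?_⟩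
    have hnorm_eq : ∀ σ : ℝ, (∫ t, ‖g (t, σ)‖ ∂μ) = ∫ t, g (t, σ) ∂μ := by
      intro σ
      refine integral_congr_ae (Eventually.of_forall fun t => ?_)
      dsimp only
      rw [Real.norm_eq_abs, abs_of_nonneg (hgnonneg _)]
    refine Integrable.mono' ((hsq.const_mul (Real.exp 1))) ?_ ?_
    · have hsm : StronglyMeasurable fun σ => ∫ t, ‖g (t, σ)‖ ∂μ :=
        MeasureTheory.StronglyMeasurable.integral_prod_left' (f := fun p => ‖g p‖) hgmeas.norm
      exact hsm.aestronglyMeasurable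
    · refine ae_of_all _ fun σ => ?_
      rw [Real.norm_eq_abs, abs_of_nonneg]
      · rw [hnorm_eq σ]; exact hg_t_bound σ
      · exact integral_nonneg fun t => norm_nonneg _
  have hKint : Integrable K μ := by
    have := hgint.integral_prod_left
    refine this.congr (ae_of_all _ fun t => ?_)
    exact (hKrepr t).symm
  have hKle : (∫ t, K t ∂μ) ≤ Real.exp 1 * M := by
    have hswap : (∫ t, (∫ σ, g (t, σ) ∂ν) ∂μ) = ∫ σ, (∫ t, g (t, σ) ∂μ) ∂ν :=
      integral_integral_swap (f := fun t σ => g (t, σ)) hgint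
    have h1 : (∫ t, K t ∂μ) = ∫ σ, (∫ t, g (t, σ) ∂μ) ∂ν := by
      rw [← hswap]
      exact integral_congr_ae (ae_of_all _ fun t => hKrepr t)
    rw [h1]
    have h2 : (∫ σ, (∫ t, g (t, σ) ∂μ) ∂ν) ≤ ∫ σ, Real.exp 1 * h' σ ^ 2 ∂ν := by
      refine integral_mono_of_nonneg
        (ae_of_all _ fun σ => integral_nonneg fun t => hgnonneg _)
        (hsq.const_mul (Real.exp 1)) (ae_of_all _ fun σ => hg_t_bound σ)
    calc (∫ σ, (∫ t, g (t, σ) ∂μ) ∂ν) ≤ ∫ σ, Real.exp 1 * h' σ ^ 2 ∂ν := h2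
      _ = Real.exp 1 * M := by rw [MeasureTheory.integral_const_mul]
  -- assemble
  have houter : (∫ t in Ioi (R - 1),
      ∫ r in (1 : ℝ)..R, (∫ σ in (1 : ℝ)..(2 - r + t), Real.exp (σ - t) * h σ) ^ 2)
      ≤ ∫ t in Ioi (R - 1), (R - 1) * (Real.exp 1 * K t) := by
    refine integral_mono_of_nonneg ?_ ?_ ?_
    · refine ae_of_all _ fun t => ?_
      exact intervalIntegral.integral_nonneg hR.le fun r _ => sq_nonneg _
    · have : Integrable (fun t => ((R - 1) * Real.exp 1) * K t) μ :=
        hKint.const_mul _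
      refine this.congr (ae_of_all _ fun t => by ring)
    · filter_upwards [ae_restrict_mem measurableSet_Ioi] with t ht
      exact hF t ht
  have hfinal : (∫ t in Ioi (R - 1), (R - 1) * (Real.exp 1 * K t))
      ≤ (R - 1) * Real.exp 1 * (Real.exp 1 * M) := by
    have heq : (∫ t in Ioi (R - 1), (R - 1) * (Real.exp 1 * K t))
        = ((R - 1) * Real.exp 1) * ∫ t, K t ∂μ := by
      rw [← MeasureTheory.integral_const_mul]
      exact integral_congr_ae (ae_of_all _ fun t => by ring)
    rw [heq]
    exact mul_le_mul_of_nonneg_left hKle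
      (mul_nonneg (by linarith) (Real.exp_pos 1).le)
  rw [hRHS]
  calc (∫ t in Ioi (R - 1),
      ∫ r in (1 : ℝ)..R, (∫ σ in (1 : ℝ)..(2 - r + t), Real.exp (σ - t) * h σ) ^ 2)
      ≤ ∫ t in Ioi (R - 1), (R - 1) * (Real.exp 1 * K t) := houter
    _ ≤ (R - 1) * Real.exp 1 * (Real.exp 1 * M) := hfinal
    _ = (R - 1) * Real.exp 1 * Real.exp 1 * M := by ring
end

section
/- Asymptotic exterior energy equipartition for the 1D wave equation: if v solves ∂_t²(rv) = ∂_r²(rv) on ℝ × (0,∞) with finite-energy radial data (v₀,v₁) in Ḣ^1 × L^2(ℝ³), then for every R > 0, Σ_{±} lim_{t→±∞} ∫_{R+|t|}^∞ |∂_{t,r}(r v(t,r))|² dr = ∫_R^∞ (∂_r(r v₀))² + r² v₁² dr. -/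
open Set MeasureTheory Filter

/-- translation of a set integral on a half line -/
lemma shift_setIntegral (g : ℝ → ℝ) (c t : ℝ) :
    ∫ r in Ioi c, g (r + t) = ∫ r in Ioi (c + t), g r := by
  have h := (measurePreserving_add_right volume t).setIntegral_preimage_emb
    (MeasurableEquiv.addRight t).measurableEmbedding g (Ioi (c + t))
  have hpre' : ((fun x => x + t) ⁻¹' Ioi (c + t) : Set ℝ) = Ioi c := by
    ext x; simp
  rw [hpre'] at h
  exact h

lemma shift_integrableOn {g : ℝ → ℝ} {c : ℝ} (t : ℝ)
    (h : IntegrableOn g (Ioi (c + t))) :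
    IntegrableOn (fun r => g (r + t)) (Ioi c) := by
  have h2 := ((measurePreserving_add_right volume t).integrableOn_comp_preimage
    (MeasurableEquiv.addRight t).measurableEmbedding (s := Ioi (c + t)) (f := g)).2 h
  have hpre' : ((fun x => x + t) ⁻¹' Ioi (c + t) : Set ℝ) = Ioi c := by
    ext x; simp
  rw [hpre'] at h2
  exact h2

/-- tail integrals of an integrable function tend to 0 -/
lemma tendsto_tail_integral {g : ℝ → ℝ} {R : ℝ} (h : IntegrableOn g (Ioi R)) :
    Tendsto (fun s : ℝ => ∫ r in Ioi s, g r) atTop (nhds 0) := by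
  have key : ∀ s : ℝ, R ≤ s →
      (∫ r in Ioi s, g r) = (∫ r in Ioi R, g r) - ∫ r in R..s, g r := by
    intro s hs
    rw [intervalIntegral.integral_of_le hs]
    have hsplit : Ioc R s ∪ Ioi s = Ioi R := Ioc_union_Ioi_eq_Ioi hs
    have hint1 : IntegrableOn g (Ioc R s) := h.mono_set Ioc_subset_Ioi_self
    have hint2 : IntegrableOn g (Ioi s) := h.mono_set (Ioi_subset_Ioi hs)
    have := setIntegral_union (Ioc_disjoint_Ioi le_rfl) measurableSet_Ioi hint1 hint2
    rw [hsplit] at this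
    rw [this]; ring
  have hlim : Tendsto (fun s : ℝ => (∫ r in Ioi R, g r) - ∫ r in R..s, g r)
      atTop (nhds 0) := by
    have := intervalIntegral_tendsto_integral_Ioi R h tendsto_id
    have h2 := (tendsto_const_nhds (x := ∫ r in Ioi R, g r) (f := atTop (α := ℝ))).sub this
    simpa using h2
  exact hlim.congr' (by filter_upwards [eventually_ge_atTop R] with s hs using (key s hs).symm)

/-- Asymptotic exterior energy equipartition for the 1D wave equation: if
`ζ(t,r) = r·v(t,r)` solves `∂_t²ζ = ∂_r²ζ` on `ℝ × (0,∞)` with finite-energy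
radial data `ζ(0) = r v₀`, `∂_tζ(0) = r v₁`, then for every `R > 0` the exterior
energies `∫_{R+|t|}^∞ |∂_{t,r}ζ|² dr` have limits as `t → ±∞` whose sum equals
`∫_R^∞ (∂_r(r v₀))² + r² v₁² dr`. -/
theorem stmt_14 (ζ : ℝ → ℝ → ℝ) (v₀ v₁ : ℝ → ℝ)
    (hreg : ContDiffOn ℝ 2 (fun p : ℝ × ℝ => ζ p.1 p.2) (univ ×ˢ Ioi 0))
    (hwave : ∀ t : ℝ, ∀ r : ℝ, 0 < r →
      deriv (fun t' => deriv (fun t'' => ζ t'' r) t') t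
        = deriv (fun r' => deriv (fun r'' => ζ t r'') r') r)
    (hinit0 : ∀ r : ℝ, 0 < r → ζ 0 r = r * v₀ r)
    (hinit1 : ∀ r : ℝ, 0 < r → deriv (fun t => ζ t r) 0 = r * v₁ r)
    (henergy : IntegrableOn
      (fun r => (deriv (fun r' => r' * v₀ r') r) ^ 2 + r ^ 2 * (v₁ r) ^ 2)
      (Ioi 0)) :
    ∀ R > (0 : ℝ), ∃ Lp Lm : ℝ,
      Tendsto (fun t : ℝ => ∫ r in Ioi (R + |t|),
          (deriv (fun r' => ζ t r') r) ^ 2 + (deriv (fun t' => ζ t' r) t) ^ 2)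
        atTop (nhds Lp) ∧
      Tendsto (fun t : ℝ => ∫ r in Ioi (R + |t|),
          (deriv (fun r' => ζ t r') r) ^ 2 + (deriv (fun t' => ζ t' r) t) ^ 2)
        atBot (nhds Lm) ∧
      Lp + Lm
        = ∫ r in Ioi R, (deriv (fun r' => r' * v₀ r') r) ^ 2 + r ^ 2 * (v₁ r) ^ 2 := by
  set F : ℝ × ℝ → ℝ := fun p => ζ p.1 p.2 with hFdef
  have hU : IsOpen ((univ : Set ℝ) ×ˢ Ioi (0:ℝ)) := isOpen_univ.prod isOpen_Ioi
  have hmem : ∀ t r : ℝ, 0 < r → (t, r) ∈ ((univ : Set ℝ) ×ˢ Ioi (0:ℝ)) :=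
    fun t r hr => ⟨trivial, hr⟩
  have hCA : ∀ t r : ℝ, 0 < r → ContDiffAt ℝ 2 F (t, r) := fun t r hr =>
    hreg.contDiffAt (hU.mem_nhds (hmem t r hr))
  have hFd : ∀ t r : ℝ, 0 < r → DifferentiableAt ℝ F (t, r) := fun t r hr =>
    (hCA t r hr).differentiableAt two_ne_zero
  have hF1 : ∀ t r : ℝ, 0 < r → ContDiffAt ℝ 1 (fderiv ℝ F) (t, r) := fun t r hr =>
    (hCA t r hr).fderiv_right (by norm_num)
  have hF1d : ∀ t r : ℝ, 0 < r → DifferentiableAt ℝ (fderiv ℝ F) (t, r) := fun t r hr =>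
    (hF1 t r hr).differentiableAt one_ne_zero
  -- directional derivative functions are differentiable with explicit derivative
  have hD : ∀ (u : ℝ × ℝ) (t r : ℝ), 0 < r →
      HasFDerivAt (fun q => fderiv ℝ F q u)
        ((ContinuousLinearMap.apply ℝ ℝ u).comp (fderiv ℝ (fderiv ℝ F) (t, r))) (t, r) :=
    fun u t r hr =>
      (ContinuousLinearMap.apply ℝ ℝ u).hasFDerivAt.comp (t, r) (hF1d t r hr).hasFDerivAt
  -- partial derivatives as directional derivatives
  have hcurve_t : ∀ (r t : ℝ), HasDerivAt (fun t' : ℝ => ((t' : ℝ), r)) ((1:ℝ), (0:ℝ)) t :=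
    fun r t => (hasDerivAt_id t).prodMk (hasDerivAt_const t r)
  have hcurve_r : ∀ (t r : ℝ), HasDerivAt (fun r' : ℝ => ((t : ℝ), r')) ((0:ℝ), (1:ℝ)) r :=
    fun t r => (hasDerivAt_const r t).prodMk (hasDerivAt_id r)
  have hP : ∀ t r : ℝ, 0 < r →
      deriv (fun t' => ζ t' r) t = fderiv ℝ F (t, r) (1, 0) := by
    intro t r hr
    exact ((hFd t r hr).hasFDerivAt.comp_hasDerivAt t (hcurve_t r t)).deriv
  have hQ : ∀ t r : ℝ, 0 < r →
      deriv (fun r' => ζ t r') r = fderiv ℝ F (t, r) (0, 1) := by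
    intro t r hr
    exact ((hFd t r hr).hasFDerivAt.comp_hasDerivAt r (hcurve_r t r)).deriv
  -- second derivative identities
  have hwv : ∀ t r : ℝ, 0 < r →
      fderiv ℝ (fderiv ℝ F) (t, r) (1, 0) (1, 0)
        = fderiv ℝ (fderiv ℝ F) (t, r) (0, 1) (0, 1) := by
    intro t r hr
    have h1 : deriv (fun t' => deriv (fun t'' => ζ t'' r) t') t
        = fderiv ℝ (fderiv ℝ F) (t, r) (1, 0) (1, 0) := by
      have he : (fun t' => deriv (fun t'' => ζ t'' r) t')
          = fun t' => fderiv ℝ F (t', r) (1, 0) := by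
        funext t'; exact hP t' r hr
      rw [he]
      have hd := ((hD (1, 0) t r hr).comp_hasDerivAt t (hcurve_t r t)).deriv
      simpa [Function.comp_def] using hd
    have h2 : deriv (fun r' => deriv (fun r'' => ζ t r'') r') r
        = fderiv ℝ (fderiv ℝ F) (t, r) (0, 1) (0, 1) := by
      have he : (fun r' => deriv (fun r'' => ζ t r'') r')
          =ᶠ[nhds r] fun r' => fderiv ℝ F (t, r') (0, 1) := by
        filter_upwards [Ioi_mem_nhds hr] with x hx using hQ t x hx
      rw [he.deriv_eq]
      have hd := ((hD (0, 1) t r hr).comp_hasDerivAt r (hcurve_r t r)).deriv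
      simpa [Function.comp_def] using hd
    rw [← h1, ← h2]
    exact hwave t r hr
  have hsymm : ∀ t r : ℝ, 0 < r →
      fderiv ℝ (fderiv ℝ F) (t, r) ((1:ℝ), (0:ℝ)) ((0:ℝ), (1:ℝ))
        = fderiv ℝ (fderiv ℝ F) (t, r) ((0:ℝ), (1:ℝ)) ((1:ℝ), (0:ℝ)) := by
    intro t r hr
    exact ((hCA t r hr).isSymmSndFDerivAt (by simp)) (1, 0) (0, 1)
  -- constancy along characteristics
  have hchar : ∀ σ : ℝ, σ * σ = 1 → ∀ c : ℝ, 0 < c → ∀ t : ℝ, 0 < c - σ * t →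
      fderiv ℝ F (t, c - σ * t) (1, σ) = fderiv ℝ F (0, c) (1, σ) := by
    intro σ hσ c hc t ht
    have hσ' : σ = 1 ∨ σ = -1 := mul_self_eq_one_iff.1 hσ
    set s : Set ℝ := {x : ℝ | 0 < c - σ * x} with hs
    have hconv : Convex ℝ s := by
      rcases hσ' with h | h
      · have : s = Iio c := by
          ext x; simp only [hs, mem_setOf_eq, mem_Iio, h, one_mul]; constructor <;> intro <;> linarith
        rw [this]; exact convex_Iio c
      · have : s = Ioi (-c) := by
          ext x; simp only [hs, mem_setOf_eq, mem_Ioi, h, neg_one_mul]; constructor <;> intro <;> linarith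
        rw [this]; exact convex_Ioi (-c)
    have hderiv : ∀ x ∈ s, HasDerivWithinAt
        (fun x : ℝ => fderiv ℝ F (x, c - σ * x) (1, σ)) ((fun _ => (0:ℝ)) x) s x := by
      intro x hx
      have hrx : 0 < c - σ * x := hx
      have hγ : HasDerivAt (fun x : ℝ => ((x : ℝ), c - σ * x)) ((1:ℝ), -σ) x := by
        have h1 : HasDerivAt (fun x : ℝ => c - σ * x) (-σ) x := by
          simpa using ((hasDerivAt_id x).const_mul σ).const_sub c
        exact (hasDerivAt_id x).prodMk h1
      have hcomp := (hD (1, σ) x (c - σ * x) hrx).comp_hasDerivAt x hγ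
      have hval : (ContinuousLinearMap.apply ℝ ℝ ((1:ℝ), σ)).comp
          (fderiv ℝ (fderiv ℝ F) (x, c - σ * x)) ((1:ℝ), -σ) = 0 := by
        have e1 : ((1:ℝ), -σ) = ((1:ℝ), (0:ℝ)) + (-σ) • ((0:ℝ), (1:ℝ)) := by
          simp [Prod.ext_iff]
        have e2 : ((1:ℝ), σ) = ((1:ℝ), (0:ℝ)) + σ • ((0:ℝ), (1:ℝ)) := by
          simp [Prod.ext_iff]
        simp only [ContinuousLinearMap.comp_apply, ContinuousLinearMap.apply_apply]
        rw [e1, e2]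
        simp only [map_add, _root_.map_smul, ContinuousLinearMap.add_apply,
          ContinuousLinearMap.smul_apply, smul_eq_mul]
        have hab := hwv x (c - σ * x) hrx
        have hm := hsymm x (c - σ * x) hrx
        linear_combination hab + σ * hm
          - (fderiv ℝ (fderiv ℝ F) (x, c - σ * x) ((0:ℝ), (1:ℝ)) ((0:ℝ), (1:ℝ))) * hσ
      rw [hval] at hcomp
      exact hcomp.hasDerivWithinAt
    have h0s : (0:ℝ) ∈ s := by simpa [hs] using hc
    have hts : t ∈ s := ht
    have hle := hconv.norm_image_sub_le_of_norm_hasDerivWithin_le (C := 0) hderiv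
      (fun x _ => by simp) h0s hts
    have : fderiv ℝ F (t, c - σ * t) (1, σ) - fderiv ℝ F (0, c - σ * 0) (1, σ) = 0 := by
      have := hle
      simp only [zero_mul] at this
      exact norm_le_zero_iff.1 this
    have h00 : c - σ * 0 = c := by ring
    rw [h00] at this
    linarith [this]
  -- data functions
  set A : ℝ → ℝ := fun x => fderiv ℝ F (0, x) (0, 1) with hAdef
  set B : ℝ → ℝ := fun x => fderiv ℝ F (0, x) (1, 0) with hBdef
  -- d'Alembert decomposition of the first derivatives
  have hPQ : ∀ t r : ℝ, |t| < r →
      fderiv ℝ F (t, r) ((1:ℝ), (0:ℝ)) = (A (r+t) + B (r+t) + (B (r-t) - A (r-t))) / 2 ∧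
      fderiv ℝ F (t, r) ((0:ℝ), (1:ℝ)) = (A (r+t) + B (r+t) - (B (r-t) - A (r-t))) / 2 := by
    intro t r h
    have hr : 0 < r := lt_of_le_of_lt (abs_nonneg t) h
    have hrp : 0 < r + t := by
      have := neg_abs_le t; linarith
    have hrm : 0 < r - t := by
      have := le_abs_self t; linarith
    have hplus := hchar 1 (by norm_num) (r + t) hrp t (by norm_num; linarith)
    have hminus := hchar (-1) (by norm_num) (r - t) hrm t (by norm_num; linarith)
    have he1 : r + t - 1 * t = r := by ring
    have hid1 : ((t : ℝ), r + t - 1 * t) = (t, r) := by rw [he1]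
    rw [hid1] at hplus
    have he2 : r - t - (-1) * t = r := by ring
    have hid2 : ((t : ℝ), r - t - (-1) * t) = (t, r) := by rw [he2]
    rw [hid2] at hminus
    -- expand (1, ±1) = (1,0) ± (0,1)
    have ep : ((1:ℝ), (1:ℝ)) = ((1:ℝ), (0:ℝ)) + ((0:ℝ), (1:ℝ)) := by simp
    have em : ((1:ℝ), (-1:ℝ)) = ((1:ℝ), (0:ℝ)) - ((0:ℝ), (1:ℝ)) := by simp [Prod.ext_iff]
    rw [ep, map_add, map_add] at hplus
    rw [em, map_sub, map_sub] at hminus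
    constructor
    · linarith [hplus, hminus]
    · linarith [hplus, hminus]
  -- the energy density identity
  set gp : ℝ → ℝ := fun x => (A x + B x) ^ 2 with hgpdef
  set gm : ℝ → ℝ := fun x => (A x - B x) ^ 2 with hgmdef
  have hiden : ∀ t r : ℝ, |t| < r →
      (deriv (fun r' => ζ t r') r) ^ 2 + (deriv (fun t' => ζ t' r) t) ^ 2
        = gp (r + t) / 2 + gm (r - t) / 2 := by
    intro t r h
    have hr : 0 < r := lt_of_le_of_lt (abs_nonneg t) h
    rw [hP t r hr, hQ t r hr, (hPQ t r h).1, (hPQ t r h).2]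
    simp only [hgpdef, hgmdef]
    ring
  -- identification of the data
  have hA0 : ∀ r : ℝ, 0 < r → A r = deriv (fun r' => r' * v₀ r') r := by
    intro r hr
    have hq : A r = fderiv ℝ F (0, r) (0, 1) := rfl
    rw [hq, ← hQ 0 r hr]
    apply Filter.EventuallyEq.deriv_eq
    filter_upwards [Ioi_mem_nhds hr] with x hx using hinit0 x hx
  have hB0 : ∀ r : ℝ, 0 < r → B r = r * v₁ r := by
    intro r hr
    have hp : B r = fderiv ℝ F (0, r) (1, 0) := rfl
    rw [hp, ← hP 0 r hr]
    exact hinit1 r hr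
  -- continuity of A and B on Ioi 0
  have hABc : ∀ r : ℝ, 0 < r → ContinuousAt A r ∧ ContinuousAt B r := by
    intro r hr
    have hline : ContinuousAt (fun x : ℝ => ((0:ℝ), x)) r :=
      (continuous_const.prodMk continuous_id).continuousAt
    constructor
    · exact ((hD (0,1) 0 r hr).differentiableAt.continuousAt).comp hline
    · exact ((hD (1,0) 0 r hr).differentiableAt.continuousAt).comp hline
  -- integrability
  have hABint : IntegrableOn (fun r => A r ^ 2 + B r ^ 2) (Ioi (0:ℝ)) := by
    apply henergy.congr_fun _ measurableSet_Ioi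
    intro r hr
    have hr' : (0:ℝ) < r := hr
    show deriv (fun r' => r' * v₀ r') r ^ 2 + r ^ 2 * v₁ r ^ 2 = A r ^ 2 + B r ^ 2
    rw [hA0 r hr', hB0 r hr']
    ring
  have hgpint : IntegrableOn gp (Ioi (0:ℝ)) := by
    have hmeas : AEStronglyMeasurable gp (volume.restrict (Ioi (0:ℝ))) := by
      apply ContinuousOn.aestronglyMeasurable _ measurableSet_Ioi
      intro r hr
      exact (((hABc r hr).1.add (hABc r hr).2).pow 2).continuousWithinAt
    apply Integrable.mono' (hABint.const_mul 2) hmeas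
    filter_upwards with r
    rw [Real.norm_eq_abs, abs_of_nonneg (sq_nonneg _)]
    simp only [hgpdef]
    nlinarith [sq_nonneg (A r - B r)]
  have hgmint : IntegrableOn gm (Ioi (0:ℝ)) := by
    have hmeas : AEStronglyMeasurable gm (volume.restrict (Ioi (0:ℝ))) := by
      apply ContinuousOn.aestronglyMeasurable _ measurableSet_Ioi
      intro r hr
      exact (((hABc r hr).1.sub (hABc r hr).2).pow 2).continuousWithinAt
    apply Integrable.mono' (hABint.const_mul 2) hmeas
    filter_upwards with r
    rw [Real.norm_eq_abs, abs_of_nonneg (sq_nonneg _)]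
    simp only [hgmdef]
    nlinarith [sq_nonneg (A r + B r)]
  -- main computation
  intro R hR
  have hmono_p : ∀ c : ℝ, R ≤ c → IntegrableOn gp (Ioi c) :=
    fun c hc => hgpint.mono_set (Ioi_subset_Ioi (by linarith))
  have hmono_m : ∀ c : ℝ, R ≤ c → IntegrableOn gm (Ioi c) :=
    fun c hc => hgmint.mono_set (Ioi_subset_Ioi (by linarith))
  have habs1 : ∀ t : ℝ, R ≤ R + |t| + t := by
    intro t; have := neg_abs_le t; linarith
  have habs2 : ∀ t : ℝ, R ≤ R + |t| - t := by
    intro t; have := le_abs_self t; linarith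
  have hsplit : ∀ t : ℝ,
      (∫ r in Ioi (R + |t|),
        (deriv (fun r' => ζ t r') r) ^ 2 + (deriv (fun t' => ζ t' r) t) ^ 2)
      = (∫ x in Ioi (R + |t| + t), gp x) / 2 + (∫ x in Ioi (R + |t| - t), gm x) / 2 := by
    intro t
    have heq : EqOn
        (fun r => (deriv (fun r' => ζ t r') r) ^ 2 + (deriv (fun t' => ζ t' r) t) ^ 2)
        (fun r => gp (r + t) / 2 + gm (r + -t) / 2) (Ioi (R + |t|)) := by
      intro r hr
      have h : |t| < r := by
        have : R + |t| < r := hr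
        linarith
      have := hiden t r h
      simpa [sub_eq_add_neg] using this
    rw [setIntegral_congr_fun measurableSet_Ioi heq]
    have hip : IntegrableOn (fun r => gp (r + t)) (Ioi (R + |t|)) :=
      shift_integrableOn t (hmono_p (R + |t| + t) (habs1 t))
    have him : IntegrableOn (fun r => gm (r + -t)) (Ioi (R + |t|)) := by
      have := shift_integrableOn (-t) (hmono_m (R + |t| + -t) (by simpa [sub_eq_add_neg] using habs2 t))
      exact this
    rw [integral_add (hip.div_const 2) (him.div_const 2)]
    rw [integral_div, integral_div, shift_setIntegral gp (R + |t|) t,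
      shift_setIntegral gm (R + |t|) (-t)]
    norm_num [sub_eq_add_neg]
  refine ⟨(∫ x in Ioi R, gm x) / 2, (∫ x in Ioi R, gp x) / 2, ?_, ?_, ?_⟩
  · -- t → +∞
    apply Tendsto.congr (fun t => (hsplit t).symm)
    have T1 : Tendsto (fun t : ℝ => R + (t + t)) atTop atTop :=
      tendsto_atTop_add_const_left atTop R (Tendsto.atTop_add_atTop tendsto_id tendsto_id)
    have T2 : Tendsto (fun t : ℝ => ∫ x in Ioi (R + (t + t)), gp x) atTop (nhds 0) :=
      (tendsto_tail_integral (hmono_p R le_rfl)).comp T1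
    have T3 : Tendsto (fun t : ℝ =>
        (∫ x in Ioi (R + (t + t)), gp x) / 2 + (∫ x in Ioi R, gm x) / 2) atTop
        (nhds ((∫ x in Ioi R, gm x) / 2)) := by
      have := (T2.div_const 2).add
        (tendsto_const_nhds (x := (∫ x in Ioi R, gm x) / 2) (f := atTop (α := ℝ)))
      simpa using this
    apply T3.congr'
    filter_upwards [eventually_ge_atTop (0:ℝ)] with t ht
    rw [show R + |t| + t = R + (t + t) from by rw [abs_of_nonneg ht]; ring,
      show R + |t| - t = R from by rw [abs_of_nonneg ht]; ring]
  · -- t → -∞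
    apply Tendsto.congr (fun t => (hsplit t).symm)
    have T1 : Tendsto (fun t : ℝ => R + (-t + -t)) atBot atTop := by
      exact tendsto_atTop_add_const_left atBot R
        (Tendsto.atTop_add_atTop tendsto_neg_atBot_atTop tendsto_neg_atBot_atTop)
    have T2 : Tendsto (fun t : ℝ => ∫ x in Ioi (R + (-t + -t)), gm x) atBot (nhds 0) :=
      (tendsto_tail_integral (hmono_m R le_rfl)).comp T1
    have T3 : Tendsto (fun t : ℝ =>
        (∫ x in Ioi R, gp x) / 2 + (∫ x in Ioi (R + (-t + -t)), gm x) / 2) atBot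
        (nhds ((∫ x in Ioi R, gp x) / 2)) := by
      have := (tendsto_const_nhds (x := (∫ x in Ioi R, gp x) / 2) (f := atBot (α := ℝ))).add
        (T2.div_const 2)
      simpa using this
    apply T3.congr'
    filter_upwards [eventually_le_atBot (0:ℝ)] with t ht
    rw [show R + |t| + t = R from by rw [abs_of_nonpos ht]; ring,
      show R + |t| - t = R + (-t + -t) from by rw [abs_of_nonpos ht]; ring]
  · -- sum of the limits
    have hintp : IntegrableOn (fun x => gp x / 2) (Ioi R) := (hmono_p R le_rfl).div_const 2
    have hintm : IntegrableOn (fun x => gm x / 2) (Ioi R) := (hmono_m R le_rfl).div_const 2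
    rw [← integral_div, ← integral_div, ← integral_add hintm hintp]
    apply setIntegral_congr_fun measurableSet_Ioi
    intro r hr
    have hr' : (0:ℝ) < r := lt_trans hR hr
    show gm r / 2 + gp r / 2 = deriv (fun r' => r' * v₀ r') r ^ 2 + r ^ 2 * v₁ r ^ 2
    have hga : gm r = (A r - B r) ^ 2 := rfl
    have hgb : gp r = (A r + B r) ^ 2 := rfl
    rw [hga, hgb, hA0 r hr', hB0 r hr']
    ring
end

section
/- Any radial C^2 solution Z of ΔZ = Z^5 on {|x| > 𝔷} in ℝ³ satisfying |Z(r) − 1/r| ≤ C/r³ for large r must have Z'(r) ≠ 0 for all r > 𝔷. -/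
open Set Filter

/-- Monotonicity of the exterior stationary solution: any radial `C²` solution `Z`
of `ΔZ = Z⁵` on `{r > 𝔷}` (radial Laplacian `Z'' + (2/r)Z'`) with the asymptotics
`|Z(r) − 1/r| ≤ C/r³` for large `r` satisfies `Z'(r) ≠ 0` for all `r > 𝔷`. -/
theorem stmt_16 (Z : ℝ → ℝ) (𝔷 : ℝ) (h𝔷 : 0 < 𝔷)
    (hreg : ContDiffOn ℝ 2 Z (Ioi 𝔷))
    (heq : ∀ r : ℝ, 𝔷 < r →
      deriv (deriv Z) r + (2 / r) * deriv Z r = (Z r) ^ 5)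
    (hasym : ∃ C R₀ : ℝ, ∀ r : ℝ, R₀ ≤ r → |Z r - 1 / r| ≤ C / r ^ 3) :
    ∀ r : ℝ, 𝔷 < r → deriv Z r ≠ 0 := by
  intro R hR hR0
  obtain ⟨C, R₀, hC⟩ := hasym
  have hopen : IsOpen (Ioi 𝔷) := isOpen_Ioi
  have hd1 : ∀ r ∈ Ioi 𝔷, HasDerivAt Z (deriv Z r) r := by
    intro r hr
    exact ((hreg.differentiableOn (by norm_num)).differentiableAt
      (hopen.mem_nhds hr)).hasDerivAt
  have hC1 : ContDiffOn ℝ 1 (deriv Z) (Ioi 𝔷) := by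
    exact hreg.deriv_of_isOpen hopen (by norm_num)
  have hd2 : ∀ r ∈ Ioi 𝔷, HasDerivAt (deriv Z) (deriv (deriv Z) r) r := by
    intro r hr
    exact ((hC1.differentiableOn (by norm_num)).differentiableAt
      (hopen.mem_nhds hr)).hasDerivAt
  -- the key monotone quantity F(r) = r^2 * Z r * Z' r
  have hF : ∀ r ∈ Ioi 𝔷, HasDerivAt (fun t => t ^ 2 * Z t * deriv Z t)
      (r ^ 2 * ((deriv Z r) ^ 2 + (Z r) ^ 6)) r := by
    intro r hr
    have hr0 : r ≠ 0 := ne_of_gt (h𝔷.trans hr)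
    have h1 : HasDerivAt (fun t => t ^ 2 * Z t * deriv Z t)
        ((2 * r ^ 1 * Z r + r ^ 2 * deriv Z r) * deriv Z r
          + r ^ 2 * Z r * deriv (deriv Z) r) r :=
      ((hasDerivAt_pow 2 r).mul (hd1 r hr)).mul (hd2 r hr)
    convert h1 using 1
    have he := heq r hr
    have h2 : deriv (deriv Z) r = Z r ^ 5 - (2 / r) * deriv Z r := by linarith
    rw [h2]
    field_simp
    ring
  have hsub : Ici R ⊆ Ioi 𝔷 := fun x hx => lt_of_lt_of_le hR hx
  have hmono : MonotoneOn (fun t => t ^ 2 * Z t * deriv Z t) (Ici R) := by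
    apply monotoneOn_of_deriv_nonneg (convex_Ici R)
    · exact fun x hx => (hF x (hsub hx)).continuousAt.continuousWithinAt
    · intro x hx
      rw [interior_Ici] at hx
      exact (hF x (hsub (mem_Ici.mpr (le_of_lt hx)))).differentiableAt.differentiableWithinAt
    · intro x hx
      rw [interior_Ici] at hx
      rw [(hF x (hsub (mem_Ici.mpr (le_of_lt hx)))).deriv]
      positivity
  have hFnn : ∀ s, R ≤ s → 0 ≤ Z s * deriv Z s := by
    intro s hs
    have h0 : (fun t => t ^ 2 * Z t * deriv Z t) R ≤
        (fun t => t ^ 2 * Z t * deriv Z t) s := hmono self_mem_Ici hs hs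
    simp only [hR0, mul_zero] at h0
    have hs2 : (0 : ℝ) < s ^ 2 := by
      have : (0 : ℝ) < s := h𝔷.trans (hsub hs)
      positivity
    nlinarith [h0]
  have hgmono : MonotoneOn (fun t => Z t ^ 2) (Ici R) := by
    apply monotoneOn_of_deriv_nonneg (convex_Ici R)
    · exact fun x hx =>
        (((hd1 x (hsub hx)).pow 2).continuousAt).continuousWithinAt
    · intro x hx
      rw [interior_Ici] at hx
      exact ((hd1 x (hsub (mem_Ici.mpr (le_of_lt hx)))).pow 2).differentiableAt.differentiableWithinAt
    · intro x hx
      rw [interior_Ici] at hx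
      rw [show deriv (fun t => Z t ^ 2) x = _ from ((hd1 x (hsub (mem_Ici.mpr (le_of_lt hx)))).pow 2).deriv]
      norm_num
      nlinarith [hFnn x hx.le]
  -- Z tends to 0 at infinity
  have hZ0 : Tendsto Z atTop (nhds 0) := by
    apply squeeze_zero_norm' (a := fun s => C / s ^ 3 + 1 / s)
    · filter_upwards [eventually_ge_atTop (max R₀ 1)] with s hs
      have hs1 : (1 : ℝ) ≤ s := le_trans (le_max_right _ _) hs
      have hs0 : R₀ ≤ s := le_trans (le_max_left _ _) hs
      have hsp : (0 : ℝ) < s := lt_of_lt_of_le one_pos hs1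
      have h1 := hC s hs0
      calc ‖Z s‖ = |(Z s - 1 / s) + 1 / s| := by rw [Real.norm_eq_abs]; ring_nf
        _ ≤ |Z s - 1 / s| + |1 / s| := abs_add_le _ _
        _ ≤ C / s ^ 3 + 1 / s := by
            rw [abs_of_pos (by positivity : (0:ℝ) < 1 / s)]
            linarith
    · have h1 : Tendsto (fun s : ℝ => C / s ^ 3) atTop (nhds 0) :=
        Tendsto.div_atTop tendsto_const_nhds (tendsto_pow_atTop (by norm_num))
      have h2 : Tendsto (fun s : ℝ => 1 / s) atTop (nhds 0) :=
        Tendsto.div_atTop tendsto_const_nhds tendsto_id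
      simpa using h1.add h2
  have hg0 : Tendsto (fun s => Z s ^ 2) atTop (nhds 0) := by
    have := hZ0.pow 2
    simpa using this
  -- Z vanishes on [R, ∞)
  have hzero : ∀ r, R ≤ r → Z r = 0 := by
    intro r hr
    have hle : Z r ^ 2 ≤ 0 := by
      apply ge_of_tendsto hg0
      filter_upwards [eventually_ge_atTop r] with s hs
      exact hgmono hr (hr.trans hs) hs
    have : Z r ^ 2 = 0 := le_antisymm hle (sq_nonneg _)
    exact pow_eq_zero_iff (by norm_num) |>.mp this
  -- contradiction with the asymptotics
  set r := max (max R R₀) 1 + |C| with hr_def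
  have hr1 : (1 : ℝ) ≤ r := by
    have : (1 : ℝ) ≤ max (max R R₀) 1 := le_max_right _ _
    have h0 : (0 : ℝ) ≤ |C| := abs_nonneg _
    linarith
  have hrR : R ≤ r := by
    have : R ≤ max (max R R₀) 1 := le_trans (le_max_left _ _) (le_max_left _ _)
    have h0 : (0 : ℝ) ≤ |C| := abs_nonneg _
    linarith
  have hrR₀ : R₀ ≤ r := by
    have : R₀ ≤ max (max R R₀) 1 := le_trans (le_max_right _ _) (le_max_left _ _)
    have h0 : (0 : ℝ) ≤ |C| := abs_nonneg _
    linarith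
  have hrpos : (0 : ℝ) < r := lt_of_lt_of_le one_pos hr1
  have hb := hC r hrR₀
  rw [hzero r hrR] at hb
  have hb' : 1 / r ≤ C / r ^ 3 := by
    have : |(0 : ℝ) - 1 / r| = 1 / r := by
      rw [zero_sub, abs_neg, abs_of_pos (by positivity)]
    linarith [hb, this.symm ▸ hb]
  rw [div_le_div_iff₀ hrpos (by positivity)] at hb'
  -- hb' : 1 * r ^ 3 ≤ C * r
  have hCabs : C ≤ |C| := le_abs_self C
  have hrC : |C| + 1 ≤ r := by
    have : (1 : ℝ) ≤ max (max R R₀) 1 := le_max_right _ _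
    linarith
  nlinarith [hb', sq_nonneg r, mul_pos hrpos hrpos]
end
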